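/- Let θ be an invertible antisymmetric real 4×4 matrix, let D ≥ 4, and let E be a real 4×D matrix such that g := E Eᵀ is positive definite. Set e^σ := √(det θ · det g), G := e^{−σ} θ g θᵀ, and define the D×D matrix h := e^σ Eᵀ G E (the semiclassical matrix H^{ab} = −h^{ab}). Then h satisfies the cubic identity h³ − (1/2)·tr(h)·h² + e^{2σ} h = 0. (Equivalently, in the paper's notation, (H³)^{ad} − (1/2) H (H²)^{ad} + e^{2σ} H^{ad} = 0 with H = tr-contraction of H^{ab}; this expresses that e^{−σ}H^{ab} has the three eigenvalues {0, α², α^{−2}} characterizing a 4-dimensional brane.) -/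

import Mathlib

open Matrix

/-!
Since `g = E Eᵀ`, the matrix `h` (after the factors `e^{±σ}` cancel) is the product
`(Eᵀ θ g) (θᵀ E)`, and the reversed product is the `4 × 4` matrix `-(θ g)²`. The cubic identity for
`h` therefore follows from `θ g · ((θ g)⁴ - ½ tr((θ g)²) (θ g)² + det θ det g) = 0`. Writing
`g = Bᵀ B`, the matrix `θ g` is intertwined by `B` with the antisymmetric matrix `A = B θ Bᵀ`, whose
characteristic polynomial is `λ⁴ - ½ tr(A²) λ² + det A` because antisymmetry kills the odd
coefficients.
-/

namespace Matrix

theorem exists_eq_of_transpose_eq_neg_fin_four {A : Matrix (Fin 4) (Fin 4) ℝ} (hA : Aᵀ = -A) :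
    ∃ p q r u v w : ℝ, A = !![0, p, q, r; -p, 0, u, v; -q, -u, 0, w; -r, -v, -w, 0] := by
  have hneg : ∀ i j, A i j = -A j i := fun i j => by simpa using congrFun (congrFun hA j) i
  refine ⟨A 0 1, A 0 2, A 0 3, A 1 2, A 1 3, A 2 3, ?_⟩
  ext i j
  fin_cases i <;> fin_cases j <;> simp <;>
    first | exact hneg _ _ | linarith [hneg 0 0, hneg 1 1, hneg 2 2, hneg 3 3]

set_option maxHeartbeats 400000 in
theorem cayley_hamilton_of_transpose_eq_neg_fin_four {A : Matrix (Fin 4) (Fin 4) ℝ}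
    (hA : Aᵀ = -A) : A ^ 4 - ((A ^ 2).trace / 2) • A ^ 2 + A.det • 1 = 0 := by
  obtain ⟨p, q, r, u, v, w, rfl⟩ := exists_eq_of_transpose_eq_neg_fin_four hA
  have hdet : det !![0, p, q, r; -p, 0, u, v; -q, -u, 0, w; -r, -v, -w, 0] =
      (p * w - q * v + r * u) ^ 2 := by
    rw [det_succ_row_zero]
    simp [Fin.sum_univ_succ, det_fin_three, Fin.succAbove]
    ring
  rw [hdet]
  ext i j
  fin_cases i <;> fin_cases j <;> (simp [pow_succ, Fin.sum_univ_four, trace]; ring)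

open scoped MatrixOrder Matrix.Norms.L2Operator in
theorem exists_eq_transpose_mul_self_of_posSemidef {n : Type*} [Fintype n] [DecidableEq n]
    {g : Matrix n n ℝ} (hg : g.PosSemidef) : ∃ B : Matrix n n ℝ, g = Bᵀ * B := by
  obtain ⟨B, rfl⟩ := CStarAlgebra.nonneg_iff_eq_star_mul_self.mp hg.nonneg
  exact ⟨B, by simp [star_eq_conjTranspose]⟩

theorem mul_cayley_hamilton_of_posSemidef_of_transpose_eq_neg {g θ : Matrix (Fin 4) (Fin 4) ℝ}
    (hg : g.PosSemidef) (hθ : θᵀ = -θ) :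
    θ * g * ((θ * g) ^ 4 - (((θ * g) ^ 2).trace / 2) • (θ * g) ^ 2 + (θ.det * g.det) • 1) = 0 := by
  obtain ⟨B, rfl⟩ := exists_eq_transpose_mul_self_of_posSemidef hg
  set A := B * θ * Bᵀ
  have hA : Aᵀ = -A := by simp [A, transpose_mul, hθ, Matrix.mul_assoc]
  have hpow (n : ℕ) : B * (θ * (Bᵀ * B)) ^ n = A ^ n * B :=
    (SemiconjBy.pow_right (by simp [SemiconjBy, A, Matrix.mul_assoc]) n).eq
  have htr : ((θ * (Bᵀ * B)) ^ 2).trace = (A ^ 2).trace := by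
    rw [sq, sq, show θ * (Bᵀ * B) * (θ * (Bᵀ * B)) = θ * Bᵀ * (A * B) by
      simp only [A, Matrix.mul_assoc], trace_mul_comm]
    simp only [A, Matrix.mul_assoc]
  have hdet : θ.det * (Bᵀ * B).det = A.det := by
    simp only [A, det_mul, det_transpose]; ring
  calc θ * (Bᵀ * B) * ((θ * (Bᵀ * B)) ^ 4 - (((θ * (Bᵀ * B)) ^ 2).trace / 2) • (θ * (Bᵀ * B)) ^ 2
        + (θ.det * (Bᵀ * B).det) • 1)
      = θ * Bᵀ * (A ^ 4 - ((A ^ 2).trace / 2) • A ^ 2 + A.det • 1) * B := by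
        rw [htr, hdet]
        simp only [Matrix.mul_assoc, Matrix.mul_add, Matrix.mul_sub, Matrix.mul_smul, hpow,
          Matrix.add_mul, Matrix.sub_mul, Matrix.smul_mul, Matrix.mul_one]
    _ = 0 := by
        rw [cayley_hamilton_of_transpose_eq_neg_fin_four hA, Matrix.mul_zero, Matrix.zero_mul]

theorem mul_cubic_eq_mul_quadratic_mul {m n R : Type*} [Fintype m] [Fintype n] [DecidableEq m]
    [DecidableEq n] [CommRing R] (U : Matrix m n R) (V : Matrix n m R) (c d : R) :
    (U * V) ^ 3 - c • (U * V) ^ 2 + d • (U * V) = U * ((V * U) ^ 2 - c • (V * U) + d • 1) * V := by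
  simp only [pow_succ, pow_zero, Matrix.one_mul, Matrix.mul_add, Matrix.mul_sub, Matrix.mul_smul,
    Matrix.add_mul, Matrix.sub_mul, Matrix.smul_mul, Matrix.mul_one, Matrix.mul_assoc]

end Matrix

theorem brane_cubic_identity
    (D : ℕ)
    (θ : Matrix (Fin 4) (Fin 4) ℝ) (E : Matrix (Fin 4) (Fin D) ℝ)
    (g G : Matrix (Fin 4) (Fin 4) ℝ) (h : Matrix (Fin D) (Fin D) ℝ)
    (hθ : θᵀ = -θ)
    (hgdef : g = E * Eᵀ)
    (hG : G = (Real.sqrt (θ.det * g.det))⁻¹ • (θ * g * θᵀ))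
    (hh : h = Real.sqrt (θ.det * g.det) • (Eᵀ * G * E)) :
    h ^ 3 - (h.trace / 2) • h ^ 2 + (Real.sqrt (θ.det * g.det)) ^ 2 • h = 0 := by
  rcases eq_or_ne (Real.sqrt (θ.det * g.det)) 0 with hs | hs
  · simp [hh, hs]
  have hsq : Real.sqrt (θ.det * g.det) ^ 2 = θ.det * g.det :=
    Real.sq_sqrt (Real.sqrt_ne_zero'.mp hs).le
  have hUV : h = (Eᵀ * θ * g) * (θᵀ * E) := by
    rw [hh, hG, Matrix.mul_smul, Matrix.smul_mul, smul_smul, mul_inv_cancel₀ hs, one_smul]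
    simp only [Matrix.mul_assoc]
  have hVU : (θᵀ * E) * (Eᵀ * θ * g) = -(θ * g) ^ 2 := by
    rw [hθ, hgdef]; simp [sq, Matrix.mul_assoc]
  have htr : h.trace = -((θ * g) ^ 2).trace := by
    rw [hUV, trace_mul_comm, hVU, trace_neg]
  have hcayley := mul_cayley_hamilton_of_posSemidef_of_transpose_eq_neg
    (hgdef ▸ posSemidef_self_mul_conjTranspose E) hθ
  rw [htr, hsq, hUV, mul_cubic_eq_mul_quadratic_mul, hVU, neg_sq, ← pow_mul, neg_div, neg_smul_neg,
    Matrix.mul_assoc (Eᵀ * θ), Matrix.mul_assoc Eᵀ, ← Matrix.mul_assoc θ, hcayley,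
    Matrix.mul_zero, Matrix.zero_mul]
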